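/- Let T_{p,q,r} (p,q,r ≥ 2) be the three-armed tree with n = p+q+r-2 vertices and A its generalized Cartan matrix. If 1/p + 1/q + 1/r = 1 (the affine cases (3,3,3), (2,4,4), (2,3,6)), then A has rank n-1 and its associated quadratic form is positive semidefinite but not positive definite. If 1/p + 1/q + 1/r < 1, then A has rank n and its quadratic form has signature (n-1, 1). -/

import Mathlib

/-- Adjacency (as a `Bool`) of the tree `T_{p,q,r}`; vertex `0` is the central vertex,
vertices `1,…,p-1`, `p,…,p+q-2`, `p+q-1,…,p+q+r-3` are the three arms. -/
def tpqrAdjAux (p q r i j : ℕ) : Bool :=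
  ((i == 0) && ((j == 1) || (j == p) || (j == p + q - 1))) ||
  ((1 ≤ i) && (i ≤ p - 2) && (j == i + 1)) ||
  ((p ≤ i) && (i ≤ p + q - 3) && (j == i + 1)) ||
  ((p + q - 1 ≤ i) && (i ≤ p + q + r - 4) && (j == i + 1))

/-- Symmetrized adjacency of `T_{p,q,r}`. -/
def tpqrAdj (p q r i j : ℕ) : Bool :=
  tpqrAdjAux p q r i j || tpqrAdjAux p q r j i

/-- The generalized Cartan matrix `A(T_{p,q,r})`. -/
def cartanT (p q r : ℕ) : Matrix (Fin (p + q + r - 2)) (Fin (p + q + r - 2)) ℤ :=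
  fun i j => if i = j then 2 else if tpqrAdj p q r i j then -1 else 0

/-- The associated quadratic form `v ↦ vᵀ A v` over `ℝ`. -/
def cartanTForm (p q r : ℕ) (v : Fin (p + q + r - 2) → ℝ) : ℝ :=
  ∑ i, ∑ j, v i * ((cartanT p q r i j : ℤ) : ℝ) * v j

/-!
Along an arm with `N` vertices counted from the centre, the path energy
`∑ₖ (yₖ - yₖ₊₁)²` with `y_N = 0` is at least `y₀² / N` (a variance identity for the increments,
whose sum telescopes to `y₀`), with equality exactly for the linear profile
`yₖ = (N - k) / N * y₀`. The form of `A(T_{p,q,r})` is the sum of the three arm energies minus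
`v₀²`, so it is at least `s * v₀²` with `s = 1/p + 1/q + 1/r - 1`, with equality only on the line
through the profile vector `w`, and `w` has form value `s`. If `s = 0` the form is positive
semidefinite with kernel `ℝ w`. If `s < 0` it is positive on `{v₀ = 0}` and negative at `w`, and a
null vector `v` gives `Q (v - v₀ w) = s v₀² ≥ 0`, forcing `v₀ = 0` and then `v = 0`.
-/

open Finset Matrix

lemma sum_sub_div_card_sq {ι : Type*} {s : Finset ι} (hs : s.Nonempty) (d : ι → ℝ) :
    ∑ i ∈ s, (d i - (∑ j ∈ s, d j) / #s) ^ 2 = ∑ i ∈ s, d i ^ 2 - (∑ i ∈ s, d i) ^ 2 / #s := by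
  have hs' : (#s : ℝ) ≠ 0 := by simp [hs.ne_empty]
  simp only [sub_sq, sum_add_distrib, sum_sub_distrib, mul_assoc, ← mul_sum, ← sum_mul,
    sum_const, nsmul_eq_mul]
  field_simp
  ring

def pathEnergy (N : ℕ) (y : ℕ → ℝ) : ℝ := ∑ k ∈ range N, (y k - y (k + 1)) ^ 2

lemma pathEnergy_eq {N : ℕ} (hN : 0 < N) {y : ℕ → ℝ} (hy : y N = 0) :
    pathEnergy N y = y 0 ^ 2 / N + ∑ k ∈ range N, (y k - y (k + 1) - y 0 / N) ^ 2 := by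
  have hsum : ∑ k ∈ range N, (y k - y (k + 1)) = y 0 := by
    rw [sum_range_sub', hy, sub_zero]
  have := sum_sub_div_card_sq (nonempty_range_iff.mpr hN.ne') (fun k => y k - y (k + 1))
  rw [hsum, card_range] at this
  rw [pathEnergy, this]
  ring

lemma sq_div_le_pathEnergy {N : ℕ} (hN : 0 < N) {y : ℕ → ℝ} (hy : y N = 0) :
    y 0 ^ 2 / N ≤ pathEnergy N y := by
  rw [pathEnergy_eq hN hy]
  have := sum_nonneg fun k (_ : k ∈ range N) => sq_nonneg (y k - y (k + 1) - y 0 / N)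
  linarith

lemma pathEnergy_eq_sq_div_iff {N : ℕ} (hN : 0 < N) {y : ℕ → ℝ} (hy : y N = 0) :
    pathEnergy N y = y 0 ^ 2 / N ↔ ∀ k ≤ N, y k = (N - k) / N * y 0 := by
  have hN' : (N : ℝ) ≠ 0 := by positivity
  rw [pathEnergy_eq hN hy, add_eq_left,
    sum_eq_zero_iff_of_nonneg fun k _ => sq_nonneg _]
  simp only [mem_range, sq_eq_zero_iff, sub_eq_zero]
  constructor
  · intro h k hk
    induction k with
    | zero => field_simp; ring
    | succ k ih =>
      rw [show y (k + 1) = y k - y 0 / N by linarith [h k (by omega)], ih (by omega)]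
      push_cast
      field_simp
      ring
  · intro h k hk
    rw [h k hk.le, h (k + 1) hk]
    push_cast
    field_simp
    ring

lemma pathEnergy_eq_of_forall_eq {N : ℕ} (hN : 0 < N) {y : ℕ → ℝ} {a : ℝ}
    (hy : ∀ k ≤ N, y k = (N - k) / N * a) : pathEnergy N y = a ^ 2 / N := by
  have hN' : (N : ℝ) ≠ 0 := by positivity
  have hy0 : y 0 = a := by simpa [hN'] using hy 0 N.zero_le
  have hyN : y N = 0 := by simpa using hy N le_rfl
  rw [(pathEnergy_eq_sq_div_iff hN hyN).mpr (by rwa [hy0]), hy0]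

lemma pathEnergy_succ_eq {M : ℕ} {y : ℕ → ℝ} (hy : y (M + 1) = 0) :
    pathEnergy (M + 1) y
      = y 0 ^ 2 + ∑ k ∈ range M, (2 * y (k + 1) ^ 2 - 2 * y k * y (k + 1)) := by
  have h1 : ∑ k ∈ range (M + 1), y k ^ 2 = y 0 ^ 2 + ∑ k ∈ range M, y (k + 1) ^ 2 := by
    rw [sum_range_succ', add_comm]
  have h2 : ∑ k ∈ range (M + 1), y (k + 1) ^ 2 = ∑ k ∈ range M, y (k + 1) ^ 2 := by
    rw [sum_range_succ, hy]; ring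
  have h3 : ∑ k ∈ range (M + 1), y k * y (k + 1) = ∑ k ∈ range M, y k * y (k + 1) := by
    rw [sum_range_succ, hy]; ring
  simp only [pathEnergy, sub_sq, sum_add_distrib, sum_sub_distrib, mul_assoc, ← mul_sum, h1, h2,
    h3]
  ring

structure SharpLowerBound {ι : Type*} [Fintype ι] (M : Matrix ι ι ℝ)
    (ℓ : (ι → ℝ) →ₗ[ℝ] ℝ) (w : ι → ℝ) (s : ℝ) : Prop where
  le : ∀ v, s * ℓ v ^ 2 ≤ v ⬝ᵥ M *ᵥ v
  eq_smul_of_eq : ∀ v, v ⬝ᵥ M *ᵥ v = s * ℓ v ^ 2 → v = ℓ v • w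
  apply_eq_one : ℓ w = 1
  form_eq : w ⬝ᵥ M *ᵥ w = s

namespace SharpLowerBound

variable {ι : Type*} [Fintype ι] {M : Matrix ι ι ℝ} {ℓ : (ι → ℝ) →ₗ[ℝ] ℝ} {w : ι → ℝ} {s : ℝ}

lemma pos_of_apply_eq_zero (h : SharpLowerBound M ℓ w s) {v : ι → ℝ} (hv : ℓ v = 0)
    (hv0 : v ≠ 0) : 0 < v ⬝ᵥ M *ᵥ v := by
  have hQ : 0 ≤ v ⬝ᵥ M *ᵥ v := by simpa [hv] using h.le v
  refine hQ.lt_of_ne fun hQ0 => hv0 ?_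
  simpa [hv] using h.eq_smul_of_eq v (by simp [hv, ← hQ0])

lemma ne_zero (h : SharpLowerBound M ℓ w s) : w ≠ 0 := by
  rintro rfl
  simpa using h.apply_eq_one

lemma finrank_ker (h : SharpLowerBound M ℓ w s) :
    Module.finrank ℝ (LinearMap.ker ℓ) = Fintype.card ι - 1 := by
  have hsurj : LinearMap.range ℓ = ⊤ :=
    LinearMap.range_eq_top.mpr fun t => ⟨t • w, by simp [h.apply_eq_one]⟩
  have := LinearMap.finrank_range_add_finrank_ker ℓ
  rw [hsurj, finrank_top, Module.finrank_self, Module.finrank_fintype_fun_eq_card] at this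
  omega

/-- For `s ≤ 0` a null vector `v` satisfies `Q (v - ℓ v • w) = s * ℓ v ^ 2`, which the bound
forces to vanish. -/
lemma eq_smul_of_mulVec_eq_zero (h : SharpLowerBound M ℓ w s) (hM : M.IsSymm) (hs : s ≤ 0)
    {v : ι → ℝ} (hv : M *ᵥ v = 0) : v = ℓ v • w := by
  have hvw : v ⬝ᵥ M *ᵥ w = 0 := by
    rw [dotProduct_mulVec, ← mulVec_transpose, hM.eq, hv, zero_dotProduct]
  have hu := h.le (v - ℓ v • w)
  simp only [map_sub, map_smul, h.apply_eq_one, smul_eq_mul, mul_one, sub_self, mulVec_sub,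
    mulVec_smul, sub_dotProduct, dotProduct_sub, smul_dotProduct, dotProduct_smul, hv, hvw,
    h.form_eq, dotProduct_zero] at hu
  apply h.eq_smul_of_eq
  rw [hv, dotProduct_zero]
  nlinarith [sq_nonneg (ℓ v)]

lemma ker_mulVecLin_eq_span (h : SharpLowerBound M ℓ w 0) (hM : M.IsSymm) :
    LinearMap.ker M.mulVecLin = Submodule.span ℝ {w} := by
  have hPSD : M.PosSemidef := .of_dotProduct_mulVec_nonneg hM (fun x => by
    simpa using h.le x)
  refine le_antisymm (fun v hv => ?_) ?_
  · rw [Submodule.mem_span_singleton]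
    exact ⟨ℓ v, (h.eq_smul_of_mulVec_eq_zero hM le_rfl hv).symm⟩
  · rw [Submodule.span_le, Set.singleton_subset_iff, SetLike.mem_coe, LinearMap.mem_ker,
      mulVecLin_apply, ← hPSD.dotProduct_mulVec_zero_iff, star_trivial, h.form_eq]

lemma ker_mulVecLin_eq_bot (h : SharpLowerBound M ℓ w s) (hM : M.IsSymm) (hs : s < 0) :
    LinearMap.ker M.mulVecLin = ⊥ := by
  refine (Submodule.eq_bot_iff _).mpr fun v hv => ?_
  rw [LinearMap.mem_ker, mulVecLin_apply] at hv
  have hvw := h.eq_smul_of_mulVec_eq_zero hM hs.le hv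
  have hQ : s * ℓ v ^ 2 = 0 := by
    have := congrArg (fun u => u ⬝ᵥ M *ᵥ u) hvw
    simp only [hv, dotProduct_zero, mulVec_smul, dotProduct_smul, smul_dotProduct, h.form_eq,
      smul_eq_mul] at this
    linarith
  have hℓ : ℓ v = 0 := by simpa [hs.ne] using hQ
  rw [hvw, hℓ, zero_smul]

end SharpLowerBound

lemma Matrix.rank_add_finrank_ker {ι K : Type*} [Fintype ι] [Field K] (M : Matrix ι ι K) :
    M.rank + Module.finrank K (LinearMap.ker M.mulVecLin) = Fintype.card ι := by
  rw [rank, LinearMap.finrank_range_add_finrank_ker, Module.finrank_fintype_fun_eq_card]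

def extendByZero {n : ℕ} (v : Fin n → ℝ) (i : ℕ) : ℝ :=
  if h : i < n then v ⟨i, h⟩ else 0

lemma extendByZero_val {n : ℕ} (v : Fin n → ℝ) (i : Fin n) : extendByZero v i = v i := by
  simp [extendByZero]

lemma sum_ite_val_eq_extendByZero {n : ℕ} (v : Fin n → ℝ) (k : ℕ) :
    ∑ i : Fin n, (if (i : ℕ) = k then v i else 0) = extendByZero v k := by
  unfold extendByZero
  split_ifs with hk
  · rw [Fintype.sum_eq_single ⟨k, hk⟩ fun i hi => if_neg fun h => hi (Fin.ext h)]
    simp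
  · exact Fintype.sum_eq_zero _ fun i => if_neg fun h : (i : ℕ) = k => hk (h ▸ i.isLt)

/-- The neighbour of a non-central vertex `j` of `T_{p,q,r}` on the side of the centre `0`. -/
def tpqrParent (p q j : ℕ) : ℕ := if j = p ∨ j = p + q - 1 then 0 else j - 1

section Tree

variable {p q r : ℕ}

lemma tpqrAdjAux_iff (hp : 2 ≤ p) (hq : 2 ≤ q) {i j : ℕ} (hj : j < p + q + r - 2) :
    tpqrAdjAux p q r i j = true ↔ j ≠ 0 ∧ i = tpqrParent p q j := by
  simp only [tpqrAdjAux, tpqrParent, Bool.or_eq_true, Bool.and_eq_true, beq_iff_eq,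
    decide_eq_true_eq]
  split_ifs <;> omega

lemma tpqrAdjAux_lt (hp : 2 ≤ p) (hq : 2 ≤ q) {i j : ℕ} (hj : j < p + q + r - 2)
    (h : tpqrAdjAux p q r i j = true) : i < j := by
  rw [tpqrAdjAux_iff hp hq hj, tpqrParent] at h
  split_ifs at h <;> omega

lemma cartanT_cast_apply (hp : 2 ≤ p) (hq : 2 ≤ q) (i j : Fin (p + q + r - 2)) :
    ((cartanT p q r i j : ℤ) : ℝ) = (if i = j then 2 else 0)
      - (if tpqrAdjAux p q r i j then 1 else 0) - (if tpqrAdjAux p q r j i then 1 else 0) := by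
  have hij := tpqrAdjAux_lt (i := i) hp hq j.isLt
  have hji := tpqrAdjAux_lt (i := j) hp hq i.isLt
  unfold cartanT tpqrAdj
  by_cases h : i = j
  · subst h
    simp_all
  · have hne : (i : ℕ) ≠ j := Fin.val_ne_of_ne h
    cases hi : tpqrAdjAux p q r i j <;> cases hj : tpqrAdjAux p q r j i <;> simp_all
    omega

lemma sum_cartanT_adj_column (hp : 2 ≤ p) (hq : 2 ≤ q) (v : Fin (p + q + r - 2) → ℝ)
    (j : Fin (p + q + r - 2)) :
    ∑ i, v i * (if tpqrAdjAux p q r i j then 1 else 0) * v j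
      = if (j : ℕ) = 0 then 0 else extendByZero v (tpqrParent p q j) * v j := by
  simp_rw [tpqrAdjAux_iff hp hq j.isLt]
  split_ifs with hj0
  · simp [hj0]
  · simp only [hj0, ne_eq, not_false_eq_true, true_and, mul_ite, mul_one, mul_zero, ite_mul,
      zero_mul, ← sum_ite_val_eq_extendByZero, sum_mul]

lemma cartanTForm_eq_sum_parent (hp : 2 ≤ p) (hq : 2 ≤ q) (v : Fin (p + q + r - 2) → ℝ) :
    cartanTForm p q r v = ∑ j ∈ range (p + q + r - 2), (2 * extendByZero v j ^ 2 -
      2 * if j = 0 then 0 else extendByZero v (tpqrParent p q j) * extendByZero v j) := by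
  have hdiag : ∑ i, ∑ j, v i * (if i = j then (2 : ℝ) else 0) * v j = ∑ j, 2 * v j ^ 2 :=
    sum_congr rfl fun i _ => by
      simp only [mul_ite, ite_mul, mul_zero, zero_mul, sum_ite_eq, mem_univ, if_true]
      ring
  have hadj :
      ∑ i : Fin _, ∑ j : Fin _, v i * (if tpqrAdjAux p q r i j then (1 : ℝ) else 0) * v j
      = ∑ j : Fin _, if (j : ℕ) = 0 then 0 else extendByZero v (tpqrParent p q j) * v j := by
    rw [sum_comm]
    exact sum_congr rfl fun j _ => sum_cartanT_adj_column hp hq v j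
  have hadj' :
      ∑ i : Fin _, ∑ j : Fin _, v i * (if tpqrAdjAux p q r j i then (1 : ℝ) else 0) * v j
      = ∑ j : Fin _, if (j : ℕ) = 0 then 0 else extendByZero v (tpqrParent p q j) * v j :=
    sum_congr rfl fun i _ => by
      rw [← sum_cartanT_adj_column hp hq v i]
      exact sum_congr rfl fun j _ => by ring
  unfold cartanTForm
  simp only [cartanT_cast_apply hp hq, mul_sub, sub_mul, sum_sub_distrib]
  rw [hdiag, hadj, hadj', ← mul_sum, ← mul_sum, ← mul_sum,
    ← Fin.sum_univ_eq_sum_range (fun j => extendByZero v j ^ 2),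
    ← Fin.sum_univ_eq_sum_range (fun j =>
      if j = 0 then 0 else extendByZero v (tpqrParent p q j) * extendByZero v j)]
  simp only [extendByZero_val]
  ring

/-- The values of `f` along the arm whose vertices are `b, b + 1, …, b + N - 2`, starting from the
centre `0` and grounded by a zero at position `N`. -/
def armVec (f : ℕ → ℝ) (b N k : ℕ) : ℝ :=
  if k = 0 then f 0 else if k < N then f (b + k - 1) else 0

lemma armVec_zero (f : ℕ → ℝ) (b N : ℕ) : armVec f b N 0 = f 0 := if_pos rfl

lemma armVec_self (f : ℕ → ℝ) (b : ℕ) {N : ℕ} (hN : 0 < N) : armVec f b N N = 0 := by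
  simp [armVec, hN.ne']

lemma armVec_of_pos (f : ℕ → ℝ) (b N : ℕ) {k : ℕ} (hk : 0 < k) (hkN : k < N) :
    armVec f b N k = f (b + k - 1) := by
  rw [armVec, if_neg hk.ne', if_pos hkN]

lemma sq_div_le_pathEnergy_armVec (f : ℕ → ℝ) (b : ℕ) {N : ℕ} (hN : 0 < N) :
    f 0 ^ 2 / N ≤ pathEnergy N (armVec f b N) := by
  simpa only [armVec_zero] using sq_div_le_pathEnergy hN (armVec_self f b hN)

lemma pathEnergy_armVec_eq_iff (f : ℕ → ℝ) (b : ℕ) {N : ℕ} (hN : 0 < N) :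
    pathEnergy N (armVec f b N) = f 0 ^ 2 / N ↔ ∀ k ≤ N, armVec f b N k = (N - k) / N * f 0 := by
  simpa only [armVec_zero] using pathEnergy_eq_sq_div_iff hN (armVec_self f b hN)

lemma sum_arm_eq_pathEnergy (f : ℕ → ℝ) {b M : ℕ} (hb : 0 < b)
    (hpar : ∀ k < M, tpqrParent p q (b + k) = if k = 0 then 0 else b + k - 1) :
    ∑ k ∈ range M, (2 * f (b + k) ^ 2 -
      2 * if b + k = 0 then 0 else f (tpqrParent p q (b + k)) * f (b + k))
      = pathEnergy (M + 1) (armVec f b (M + 1)) - f 0 ^ 2 := by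
  rw [pathEnergy_succ_eq (armVec_self f b M.succ_pos), armVec_zero, add_sub_cancel_left]
  refine sum_congr rfl fun k hk => ?_
  have hk : k < M := mem_range.mp hk
  have hsucc : armVec f b (M + 1) (k + 1) = f (b + k) := by
    rw [armVec_of_pos f b (M + 1) k.succ_pos (by omega), Nat.add_succ_sub_one]
  have hcurr : armVec f b (M + 1) k = if k = 0 then f 0 else f (b + k - 1) := by
    rw [armVec]
    split_ifs <;> first | rfl | omega
  rw [if_neg (by omega), hpar k hk, hsucc, hcurr]
  split_ifs <;> ring

lemma cartanTForm_eq_sum_pathEnergy (hp : 2 ≤ p) (hq : 2 ≤ q) (hr : 2 ≤ r)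
    (v : Fin (p + q + r - 2) → ℝ) :
    cartanTForm p q r v = pathEnergy p (armVec (extendByZero v) 1 p)
      + pathEnergy q (armVec (extendByZero v) p q)
      + pathEnergy r (armVec (extendByZero v) (p + q - 1) r) - extendByZero v 0 ^ 2 := by
  rw [cartanTForm_eq_sum_parent hp hq,
    show range (p + q + r - 2) = range (1 + (p - 1) + (q - 1) + (r - 1)) by congr 1; omega,
    sum_range_add, sum_range_add, sum_range_add, sum_range_one,
    show 1 + (p - 1) = p by omega, show p + (q - 1) = p + q - 1 by omega,
    sum_arm_eq_pathEnergy _ (by omega) ?_, sum_arm_eq_pathEnergy _ (by omega) ?_,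
    sum_arm_eq_pathEnergy _ (by omega) ?_,
    Nat.sub_add_cancel (by omega : 1 ≤ p), Nat.sub_add_cancel (by omega : 1 ≤ q),
    Nat.sub_add_cancel (by omega : 1 ≤ r)]
  · simp only [↓reduceIte]
    ring
  all_goals intro k hk; unfold tpqrParent; split_ifs <;> omega

lemma eq_of_armVec_eq (hp : 2 ≤ p) (hq : 2 ≤ q) {f g : ℕ → ℝ}
    (h1 : ∀ k < p, armVec f 1 p k = armVec g 1 p k)
    (h2 : ∀ k < q, armVec f p q k = armVec g p q k)
    (h3 : ∀ k < r, armVec f (p + q - 1) r k = armVec g (p + q - 1) r k) :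
    ∀ j < p + q + r - 2, f j = g j := by
  intro j hj
  rcases Nat.eq_zero_or_pos j with rfl | hj0
  · simpa [armVec_zero] using h1 0 (by omega)
  by_cases hjp : j < p
  · simpa [armVec_of_pos _ _ _ hj0 hjp] using h1 j hjp
  by_cases hjq : j < p + q - 1
  · have h := h2 (j - p + 1) (by omega)
    rwa [armVec_of_pos _ _ _ (by omega) (by omega), armVec_of_pos _ _ _ (by omega) (by omega),
      show p + (j - p + 1) - 1 = j by omega] at h
  · have h := h3 (j - (p + q - 1) + 1) (by omega)
    rwa [armVec_of_pos _ _ _ (by omega) (by omega), armVec_of_pos _ _ _ (by omega) (by omega),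
      show p + q - 1 + (j - (p + q - 1) + 1) - 1 = j by omega] at h

/-- Equal to `1` at the centre and decreasing linearly along each arm of length `N`, with
slope `1 / N`, towards a virtual zero one step beyond the leaf. -/
noncomputable def tpqrProfile (p q r : ℕ) : Fin (p + q + r - 2) → ℝ := fun i =>
  if (i : ℕ) < p then (p - i) / p
  else if (i : ℕ) < p + q - 1 then (p + q - 1 - i) / q
  else (p + q + r - 2 - i) / r

lemma armVec_tpqrProfile (hp : 2 ≤ p) (hq : 2 ≤ q) (hr : 2 ≤ r) :
    (∀ k ≤ p, armVec (extendByZero (tpqrProfile p q r)) 1 p k = (p - k) / p) ∧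
    (∀ k ≤ q, armVec (extendByZero (tpqrProfile p q r)) p q k = (q - k) / q) ∧
    (∀ k ≤ r, armVec (extendByZero (tpqrProfile p q r)) (p + q - 1) r k = (r - k) / r) := by
  have hp0 : (p : ℝ) ≠ 0 := by positivity
  have hq0 : (q : ℝ) ≠ 0 := by positivity
  have hr0 : (r : ℝ) ≠ 0 := by positivity
  refine ⟨fun k hk => ?_, fun k hk => ?_, fun k hk => ?_⟩ <;>
  · simp only [armVec, extendByZero, tpqrProfile]
    split_ifs <;> first | omega | skip
    · subst_vars; simp [*]
    · rw [Nat.cast_sub (by omega), Nat.cast_add]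
      push_cast [Nat.cast_sub (by omega : 1 ≤ p + q)]
      ring
    · rw [le_antisymm hk (by omega), sub_self, zero_div]

lemma extendByZero_smul {n : ℕ} (c : ℝ) (v : Fin n → ℝ) :
    extendByZero (c • v) = c • extendByZero v := by
  funext i
  simp only [extendByZero, Pi.smul_apply, smul_eq_mul]
  split_ifs <;> simp

lemma armVec_smul (c : ℝ) (f : ℕ → ℝ) (b N k : ℕ) :
    armVec (c • f) b N k = c * armVec f b N k := by
  simp only [armVec, Pi.smul_apply, smul_eq_mul]
  split_ifs <;> simp

lemma cartanTForm_ge (hp : 2 ≤ p) (hq : 2 ≤ q) (hr : 2 ≤ r) (v : Fin (p + q + r - 2) → ℝ) :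
    ((1 : ℝ) / p + 1 / q + 1 / r - 1) * extendByZero v 0 ^ 2 ≤ cartanTForm p q r v := by
  set f := extendByZero v
  have h1 := sq_div_le_pathEnergy_armVec f 1 (N := p) (by omega)
  have h2 := sq_div_le_pathEnergy_armVec f p (N := q) (by omega)
  have h3 := sq_div_le_pathEnergy_armVec f (p + q - 1) (N := r) (by omega)
  rw [cartanTForm_eq_sum_pathEnergy hp hq hr]
  linarith [show ((1 : ℝ) / p + 1 / q + 1 / r - 1) * f 0 ^ 2
    = f 0 ^ 2 / p + f 0 ^ 2 / q + f 0 ^ 2 / r - f 0 ^ 2 by ring]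

lemma eq_smul_tpqrProfile_of_cartanTForm_eq (hp : 2 ≤ p) (hq : 2 ≤ q) (hr : 2 ≤ r)
    {v : Fin (p + q + r - 2) → ℝ}
    (h : cartanTForm p q r v = ((1 : ℝ) / p + 1 / q + 1 / r - 1) * extendByZero v 0 ^ 2) :
    v = extendByZero v 0 • tpqrProfile p q r := by
  rw [cartanTForm_eq_sum_pathEnergy hp hq hr] at h
  set f := extendByZero v
  have h1 := sq_div_le_pathEnergy_armVec f 1 (N := p) (by omega)
  have h2 := sq_div_le_pathEnergy_armVec f p (N := q) (by omega)
  have h3 := sq_div_le_pathEnergy_armVec f (p + q - 1) (N := r) (by omega)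
  have hs : ((1 : ℝ) / p + 1 / q + 1 / r - 1) * f 0 ^ 2
      = f 0 ^ 2 / p + f 0 ^ 2 / q + f 0 ^ 2 / r - f 0 ^ 2 := by ring
  have e1 := (pathEnergy_armVec_eq_iff f 1 (N := p) (by omega)).mp (by linarith)
  have e2 := (pathEnergy_armVec_eq_iff f p (N := q) (by omega)).mp (by linarith)
  have e3 := (pathEnergy_armVec_eq_iff f (p + q - 1) (N := r) (by omega)).mp (by linarith)
  obtain ⟨w1, w2, w3⟩ := armVec_tpqrProfile hp hq hr
  funext j
  have := eq_of_armVec_eq hp hq (f := f) (g := extendByZero (f 0 • tpqrProfile p q r))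
    (fun k hk => by rw [extendByZero_smul, armVec_smul, e1 k hk.le, w1 k hk.le]; ring)
    (fun k hk => by rw [extendByZero_smul, armVec_smul, e2 k hk.le, w2 k hk.le]; ring)
    (fun k hk => by rw [extendByZero_smul, armVec_smul, e3 k hk.le, w3 k hk.le]; ring)
    j j.isLt
  simpa only [f, extendByZero_val] using this

lemma extendByZero_tpqrProfile_zero (hp : 2 ≤ p) (hq : 2 ≤ q) :
    extendByZero (tpqrProfile p q r) 0 = 1 := by
  have hp0 : (p : ℝ) ≠ 0 := by positivity
  simp [extendByZero, tpqrProfile, hp0, show 0 < p + q + r - 2 by omega, show 0 < p by omega]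

lemma cartanTForm_tpqrProfile (hp : 2 ≤ p) (hq : 2 ≤ q) (hr : 2 ≤ r) :
    cartanTForm p q r (tpqrProfile p q r) = (1 : ℝ) / p + 1 / q + 1 / r - 1 := by
  obtain ⟨w1, w2, w3⟩ := armVec_tpqrProfile hp hq hr
  rw [cartanTForm_eq_sum_pathEnergy hp hq hr,
    pathEnergy_eq_of_forall_eq (a := 1) (by omega) fun k hk => by rw [w1 k hk, mul_one],
    pathEnergy_eq_of_forall_eq (a := 1) (by omega) fun k hk => by rw [w2 k hk, mul_one],
    pathEnergy_eq_of_forall_eq (a := 1) (by omega) fun k hk => by rw [w3 k hk, mul_one],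
    extendByZero_tpqrProfile_zero hp hq]
  ring

lemma cartanT_isSymm : (cartanT p q r).IsSymm := by
  ext i j
  rw [transpose_apply]
  unfold cartanT tpqrAdj
  by_cases h : i = j
  · rw [h]
  · rw [if_neg h, if_neg (Ne.symm h), Bool.or_comm]

lemma cartanTForm_eq_dotProduct (v : Fin (p + q + r - 2) → ℝ) :
    cartanTForm p q r v = v ⬝ᵥ (cartanT p q r).map (fun z => (z : ℝ)) *ᵥ v := by
  simp only [cartanTForm, dotProduct, mulVec, map_apply, mul_sum, mul_assoc]

lemma sharpLowerBound_cartanT (hp : 2 ≤ p) (hq : 2 ≤ q) (hr : 2 ≤ r) :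
    SharpLowerBound ((cartanT p q r).map (fun z => (z : ℝ)))
      (LinearMap.proj ⟨0, by omega⟩) (tpqrProfile p q r) ((1 : ℝ) / p + 1 / q + 1 / r - 1) where
  le v := by
    rw [← cartanTForm_eq_dotProduct, LinearMap.proj_apply, ← extendByZero_val v]
    exact cartanTForm_ge hp hq hr v
  eq_smul_of_eq v h := by
    rw [← cartanTForm_eq_dotProduct, LinearMap.proj_apply, ← extendByZero_val v] at h
    rw [LinearMap.proj_apply, ← extendByZero_val v]
    exact eq_smul_tpqrProfile_of_cartanTForm_eq hp hq hr h
  apply_eq_one := by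
    rw [LinearMap.proj_apply, ← extendByZero_val (tpqrProfile p q r)]
    exact extendByZero_tpqrProfile_zero hp hq
  form_eq := by rw [← cartanTForm_eq_dotProduct, cartanTForm_tpqrProfile hp hq hr]

end Tree

theorem cartanT_affine_and_indefinite_cases (p q r : ℕ)
    (hp : 2 ≤ p) (hq : 2 ≤ q) (hr : 2 ≤ r) :
    ((1 : ℝ) / p + 1 / q + 1 / r = 1 →
      ((cartanT p q r).map (fun z => (z : ℝ))).rank = (p + q + r - 2) - 1 ∧
      (∀ v, 0 ≤ cartanTForm p q r v) ∧
      ¬ (∀ v, v ≠ 0 → 0 < cartanTForm p q r v)) ∧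
    ((1 : ℝ) / p + 1 / q + 1 / r < 1 →
      ((cartanT p q r).map (fun z => (z : ℝ))).rank = p + q + r - 2 ∧
      (∃ W : Submodule ℝ (Fin (p + q + r - 2) → ℝ),
        Module.finrank ℝ W = (p + q + r - 2) - 1 ∧
          ∀ v ∈ W, v ≠ 0 → 0 < cartanTForm p q r v) ∧
      (∃ w, cartanTForm p q r w < 0)) := by
  have hB := sharpLowerBound_cartanT hp hq hr
  have hM : ((cartanT p q r).map (fun z => (z : ℝ))).IsSymm := cartanT_isSymm.map _
  have hrank := ((cartanT p q r).map (fun z => (z : ℝ))).rank_add_finrank_ker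
  rw [Fintype.card_fin] at hrank
  simp only [cartanTForm_eq_dotProduct]
  refine ⟨fun hs => ?_, fun hs => ?_⟩
  · rw [show (1 : ℝ) / p + 1 / q + 1 / r - 1 = 0 by linarith] at hB
    refine ⟨?_, fun v => by simpa using hB.le v, fun hpos => ?_⟩
    · rw [hB.ker_mulVecLin_eq_span hM, finrank_span_singleton hB.ne_zero] at hrank
      omega
    · simpa [hB.form_eq] using hpos _ hB.ne_zero
  · have hs' : (1 : ℝ) / p + 1 / q + 1 / r - 1 < 0 := by linarith
    refine ⟨?_, ⟨_, hB.finrank_ker.trans (by rw [Fintype.card_fin]),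
      fun v hv hv0 => hB.pos_of_apply_eq_zero hv hv0⟩, ⟨_, hB.form_eq.trans_lt hs'⟩⟩
    rw [hB.ker_mulVecLin_eq_bot hM hs', finrank_bot] at hrank
    omega
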